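/- Let A₀ be an n×n Hermitian matrix, v a row vector in ℂⁿ, a and b real numbers with b > a, and let A₊ be the (n+1)×(n+1) Hermitian matrix with top-left entry a, first row (a, v), first column (a, v*), and lower-right block A₀, and A₋ the same matrix but with top-left entry b. If det(A₊) ≠ 0 and det(A₋) ≠ 0 and det(A₊)·det(A₋) < 0, then the signatures satisfy σ(A₋) − σ(A₊) = 2 or σ(A₋) − σ(A₊) = −2. -/

import Mathlib

/-- The signature of a Hermitian matrix: the number of positive eigenvalues
minus the number of negative eigenvalues (with multiplicity). -/
noncomputable def matSig {n : Type*} [Fintype n] [DecidableEq n] {A : Matrix n n ℂ}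
    (hA : A.IsHermitian) : ℤ :=
  ((Finset.univ.filter fun i => 0 < hA.eigenvalues i).card : ℤ) -
    ((Finset.univ.filter fun i => hA.eigenvalues i < 0).card : ℤ)

/-- The bordered matrix with top-left entry `d`, first row `(d, v)`, first
column `(d, v*)` and lower-right block `A₀`. -/
noncomputable def bordered {n : ℕ} (d : ℝ) (v : Fin n → ℂ) (A₀ : Matrix (Fin n) (Fin n) ℂ) :
    Matrix (Fin 1 ⊕ Fin n) (Fin 1 ⊕ Fin n) ℂ :=
  Matrix.fromBlocks (Matrix.of fun _ _ => (d : ℂ)) (Matrix.of fun _ j => v j)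
    (Matrix.of fun i _ => star (v i)) A₀

section Aux
set_option linter.unusedSectionVars false

open Finset Matrix Module
variable {ι : Type*} [Fintype ι] [DecidableEq ι]

lemma toEuc_eigen {A : Matrix ι ι ℂ} (hA : A.IsHermitian) (j : ι) :
    Matrix.toEuclideanLin A (hA.eigenvectorBasis j) = hA.eigenvalues j • hA.eigenvectorBasis j := by
  apply (WithLp.equiv 2 _).injective
  ext i
  have := congrFun (hA.mulVec_eigenvectorBasis j) i
  simpa [Matrix.ofLp_toEuclideanLin_apply, Matrix.toLin'_apply] using this

lemma repr_toEuc {A : Matrix ι ι ℂ} (hA : A.IsHermitian) (x : EuclideanSpace ℂ ι) (i : ι) :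
    hA.eigenvectorBasis.repr (Matrix.toEuclideanLin A x) i
      = (hA.eigenvalues i : ℂ) * hA.eigenvectorBasis.repr x i := by
  set b := hA.eigenvectorBasis
  rw [b.repr_apply_apply, b.repr_apply_apply]
  have hsymm := (Matrix.isHermitian_iff_isSymmetric.1 hA)
  rw [← hsymm (b i) x, toEuc_eigen hA i]
  rw [show (hA.eigenvalues i • b i : EuclideanSpace ℂ ι)
      = ((hA.eigenvalues i : ℂ) • b i : EuclideanSpace ℂ ι) from rfl]
  rw [inner_smul_left]
  simp

noncomputable def qf (A : Matrix ι ι ℂ) (x : EuclideanSpace ℂ ι) : ℝ :=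
  (inner ℂ x (Matrix.toEuclideanLin A x) : ℂ).re

lemma qf_eq_sum {A : Matrix ι ι ℂ} (hA : A.IsHermitian) (x : EuclideanSpace ℂ ι) :
    qf A x = ∑ i, hA.eigenvalues i * ‖hA.eigenvectorBasis.repr x i‖^2 := by
  set b := hA.eigenvectorBasis
  have h1 : (inner ℂ x (Matrix.toEuclideanLin A x) : ℂ)
      = inner ℂ (b.repr x) (b.repr (Matrix.toEuclideanLin A x)) := by
    rw [b.repr.inner_map_map]
  have h2 : (inner ℂ (b.repr x) (b.repr (Matrix.toEuclideanLin A x)) : ℂ)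
      = ∑ i, (starRingEnd ℂ) (b.repr x i) * ((hA.eigenvalues i : ℂ) * b.repr x i) := by
    rw [PiLp.inner_apply]
    exact Finset.sum_congr rfl fun i _ => by rw [repr_toEuc hA x i, RCLike.inner_apply']
  rw [qf, h1, h2]
  rw [Complex.re_sum]
  refine Finset.sum_congr rfl fun i _ => ?_
  have : (starRingEnd ℂ) (b.repr x i) * ((hA.eigenvalues i : ℂ) * b.repr x i)
      = (hA.eigenvalues i : ℂ) * ((starRingEnd ℂ) (b.repr x i) * b.repr x i) := by ring
  rw [this]
  rw [Complex.conj_mul']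
  push_cast
  simp [← Complex.ofReal_pow]

/-- Vectors whose eigencoordinates are supported in `s`. -/
noncomputable def suppSub (b : OrthonormalBasis ι ℂ (EuclideanSpace ℂ ι)) (s : Set ι) :
    Submodule ℂ (EuclideanSpace ℂ ι) where
  carrier := {x | ∀ j, j ∉ s → b.repr x j = 0}
  add_mem' := fun hx hy j hj => by simp [map_add, hx j hj, hy j hj]
  zero_mem' := fun j hj => by simp
  smul_mem' := fun c x hx j hj => by simp [_root_.map_smul, hx j hj]

lemma span_le_suppSub (b : OrthonormalBasis ι ℂ (EuclideanSpace ℂ ι)) (s : Set ι) :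
    Submodule.span ℂ (Set.range fun i : s => b i) ≤ suppSub b s := by
  rw [Submodule.span_le]
  rintro _ ⟨i, rfl⟩ j hj
  rw [b.repr_self]
  have : (i : ι) ≠ j := fun h => hj (h ▸ i.2)
  simp [EuclideanSpace.single_apply, this.symm]

lemma finrank_span_eigen (b : OrthonormalBasis ι ℂ (EuclideanSpace ℂ ι)) (s : Set ι)
    [Fintype s] :
    finrank ℂ (Submodule.span ℂ (Set.range fun i : s => b i)) = Fintype.card s := by
  apply finrank_span_eq_card
  exact (b.orthonormal.linearIndependent).comp Subtype.val Subtype.val_injective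

lemma finrank_le_negCount {A : Matrix ι ι ℂ} (hA : A.IsHermitian)
    (W : Submodule ℂ (EuclideanSpace ℂ ι)) (hW : ∀ x ∈ W, x ≠ 0 → qf A x < 0) :
    finrank ℂ W ≤ (Finset.univ.filter fun i => hA.eigenvalues i < 0).card := by
  classical
  set b := hA.eigenvectorBasis
  set s : Set ι := {i | ¬ hA.eigenvalues i < 0}
  set V := Submodule.span ℂ (Set.range fun i : s => b i) with hV
  have hVnn : ∀ x ∈ V, 0 ≤ qf A x := by
    intro x hx
    have hsupp := span_le_suppSub b s hx
    rw [qf_eq_sum hA]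
    apply Finset.sum_nonneg
    intro i _
    by_cases h : hA.eigenvalues i < 0
    · have : b.repr x i = 0 := hsupp i (by simpa [s] using h)
      simp [show hA.eigenvectorBasis.repr x i = 0 from this]
    · push_neg at h
      positivity
  have hdisj : W ⊓ V = ⊥ := by
    rw [Submodule.eq_bot_iff]
    intro x ⟨hxW, hxV⟩
    by_contra hx0
    exact absurd (hVnn x hxV) (not_le.2 (hW x hxW hx0))
  have hsum := Submodule.finrank_sup_add_finrank_inf_eq W V
  rw [hdisj] at hsum
  have hVcard : finrank ℂ V = Fintype.card s := finrank_span_eigen b s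
  have hcards : Fintype.card s
      = Fintype.card ι - (Finset.univ.filter fun i => hA.eigenvalues i < 0).card := by
    rw [Fintype.card_subtype]
    simp only [s, Set.mem_setOf_eq]
    rw [Finset.filter_not, Finset.card_sdiff_of_subset (Finset.filter_subset _ _), Finset.card_univ]
  have hle : finrank ℂ ↥(W ⊔ V) ≤ Fintype.card ι := by
    have := Submodule.finrank_le (W ⊔ V)
    rwa [finrank_euclideanSpace] at this
  have hfle : (Finset.univ.filter fun i => hA.eigenvalues i < 0).card ≤ Fintype.card ι := by
    simpa using Finset.card_filter_le Finset.univ _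
  simp only [finrank_bot, add_zero] at hsum
  omega

lemma exists_neg_subspace {A : Matrix ι ι ℂ} (hA : A.IsHermitian) :
    ∃ W : Submodule ℂ (EuclideanSpace ℂ ι),
      finrank ℂ W = (Finset.univ.filter fun i => hA.eigenvalues i < 0).card ∧
      ∀ x ∈ W, x ≠ 0 → qf A x < 0 := by
  classical
  set b := hA.eigenvectorBasis
  set s : Set ι := {i | hA.eigenvalues i < 0}
  refine ⟨Submodule.span ℂ (Set.range fun i : s => b i), ?_, ?_⟩
  · rw [finrank_span_eigen b s, Fintype.card_subtype]
    simp only [s, Set.mem_setOf_eq]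
  · intro x hx hx0
    have hsupp := span_le_suppSub b s hx
    rw [qf_eq_sum hA]
    obtain ⟨i, hi⟩ : ∃ i, b.repr x i ≠ 0 := by
      by_contra h
      push_neg at h
      apply hx0
      have : b.repr x = 0 := by ext i; exact h i
      simpa using congrArg b.repr.symm this
    have his : hA.eigenvalues i < 0 := by
      by_contra h
      exact hi (hsupp i h)
    have hterm : hA.eigenvalues i * ‖b.repr x i‖^2 < 0 := by
      exact mul_neg_of_neg_of_pos his (pow_pos (norm_pos_iff.mpr hi) 2)
    have hrest : ∀ j ∈ Finset.univ.erase i, hA.eigenvalues j * ‖b.repr x j‖^2 ≤ 0 := by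
      intro j _
      by_cases h : hA.eigenvalues j < 0
      · apply mul_nonpos_of_nonpos_of_nonneg h.le (by positivity)
      · have : b.repr x j = 0 := hsupp j h
        simp [this]
    calc ∑ j, hA.eigenvalues j * ‖b.repr x j‖^2
        = hA.eigenvalues i * ‖b.repr x i‖^2
          + ∑ j ∈ Finset.univ.erase i, hA.eigenvalues j * ‖b.repr x j‖^2 := by
          exact (Finset.add_sum_erase _ _ (Finset.mem_univ i)).symm
      _ < 0 := by
          have := Finset.sum_nonpos hrest
          linarith

lemma prod_sign_aux (f : ι → ℝ) (s : Finset ι) (h : ∀ i ∈ s, f i < 0) :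
    (Even s.card → 0 < ∏ i ∈ s, f i) ∧ (Odd s.card → ∏ i ∈ s, f i < 0) := by
  classical
  induction s using Finset.cons_induction with
  | empty => simp
  | cons i s his ih =>
    obtain ⟨ih1, ih2⟩ := ih (fun j hj => h j (Finset.mem_cons_of_mem hj))
    have hfi : f i < 0 := h i (Finset.mem_cons_self i s)
    rw [Finset.prod_cons, Finset.card_cons]
    constructor
    · intro he
      have : Odd s.card := by
        rcases Nat.even_or_odd s.card with h' | h'
        · exfalso; exact (Nat.even_add_one.mp he) h'
        · exact h'
      exact mul_pos_of_neg_of_neg hfi (ih2 this)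
    · intro ho
      have : Even s.card := by
        rcases Nat.even_or_odd s.card with h' | h'
        · exact h'
        · exfalso; exact Nat.not_even_iff_odd.mpr ho (Nat.even_add_one.mpr (Nat.not_even_iff_odd.mpr h'))
      exact mul_neg_of_neg_of_pos hfi (ih1 this)

lemma prod_neg_iff_odd {f : ι → ℝ} (hf : ∀ i, f i ≠ 0) :
    (∏ i, f i) < 0 ↔ Odd (Finset.univ.filter fun i => f i < 0).card := by
  classical
  rw [← Finset.prod_filter_mul_prod_filter_not Finset.univ (fun i => f i < 0)]
  have hpos : 0 < ∏ i ∈ Finset.univ.filter (fun i => ¬ f i < 0), f i :=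
    Finset.prod_pos fun i hi =>
      lt_of_le_of_ne (not_lt.1 (Finset.mem_filter.1 hi).2) (Ne.symm (hf i))
  have hneg := prod_sign_aux f (Finset.univ.filter fun i => f i < 0)
    (fun i hi => (Finset.mem_filter.1 hi).2)
  constructor
  · intro h
    by_contra hodd
    rw [Nat.not_odd_iff_even] at hodd
    nlinarith [hneg.1 hodd]
  · intro hodd
    nlinarith [hneg.2 hodd]

lemma qf_eq_dot {m : Type*} [Fintype m] [DecidableEq m] (M : Matrix m m ℂ)
    (x : EuclideanSpace ℂ m) : qf M x = (star (x : m → ℂ) ⬝ᵥ (M *ᵥ (x : m → ℂ))).re := by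
  rw [qf, EuclideanSpace.inner_eq_star_dotProduct, dotProduct_comm]
  congr 1

lemma qf_bordered_sub {n : ℕ} (d e : ℝ) (v : Fin n → ℂ) (A₀ : Matrix (Fin n) (Fin n) ℂ)
    (x : EuclideanSpace ℂ (Fin 1 ⊕ Fin n)) :
    qf (bordered e v A₀) x
      = qf (bordered d v A₀) x + (e - d) * ‖x (Sum.inl 0)‖^2 := by
  have h1 : qf (bordered e v A₀) x - qf (bordered d v A₀) x
      = (star (x : Fin 1 ⊕ Fin n → ℂ) ⬝ᵥ
          ((bordered e v A₀ - bordered d v A₀) *ᵥ (x : Fin 1 ⊕ Fin n → ℂ))).re := by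
    rw [qf_eq_dot, qf_eq_dot, Matrix.sub_mulVec, dotProduct_sub, Complex.sub_re]
  have h2 : (star (x : Fin 1 ⊕ Fin n → ℂ) ⬝ᵥ
          ((bordered e v A₀ - bordered d v A₀) *ᵥ (x : Fin 1 ⊕ Fin n → ℂ))).re
      = (e - d) * ‖x (Sum.inl 0)‖^2 := by
    simp only [bordered, dotProduct, Matrix.mulVec, Fintype.sum_sum_type,
      Matrix.sub_apply, Matrix.fromBlocks_apply₁₁, Matrix.fromBlocks_apply₁₂,
      Matrix.fromBlocks_apply₂₁, Matrix.fromBlocks_apply₂₂, Matrix.of_apply,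
      Fin.sum_univ_one, sub_self, zero_mul, Finset.sum_const_zero, add_zero, mul_zero,
      Pi.star_apply]
    show ((starRingEnd ℂ) (x (Sum.inl 0)) * (((e:ℂ) - d) * x (Sum.inl 0))).re
        = (e - d) * ‖x (Sum.inl 0)‖^2
    rw [mul_left_comm, Complex.conj_mul', ← Complex.ofReal_pow, ← Complex.ofReal_sub,
      ← Complex.ofReal_mul, Complex.ofReal_re]
  linarith [h1, h2]


end Aux

theorem stmt0 {n : ℕ} (A₀ : Matrix (Fin n) (Fin n) ℂ) (hA₀ : A₀.IsHermitian)
    (v : Fin n → ℂ) (a b : ℝ) (hab : a < b)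
    (hplus : (bordered a v A₀).IsHermitian) (hminus : (bordered b v A₀).IsHermitian)
    (hdp : (bordered a v A₀).det ≠ 0) (hdm : (bordered b v A₀).det ≠ 0)
    (c : ℝ) (hc : c < 0) (hprod : (bordered a v A₀).det * (bordered b v A₀).det = (c : ℂ)) :
    matSig hminus - matSig hplus = 2 ∨ matSig hminus - matSig hplus = -2 := by
  set qa := (Finset.univ.filter fun i => hplus.eigenvalues i < 0).card with hqa_def
  set qb := (Finset.univ.filter fun i => hminus.eigenvalues i < 0).card with hqb_def
  set Pa := ∏ i, hplus.eigenvalues i with hPa_def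
  set Pb := ∏ i, hminus.eigenvalues i with hPb_def
  have hdetp : (bordered a v A₀).det = (Pa : ℂ) := by
    rw [hplus.det_eq_prod_eigenvalues, hPa_def, Complex.ofReal_prod]
    exact Finset.prod_congr rfl fun i _ => rfl
  have hdetm : (bordered b v A₀).det = (Pb : ℂ) := by
    rw [hminus.det_eq_prod_eigenvalues, hPb_def, Complex.ofReal_prod]
    exact Finset.prod_congr rfl fun i _ => rfl
  have hPab : Pa * Pb = c := by
    have h := hprod
    rw [hdetp, hdetm, ← Complex.ofReal_mul] at h
    exact_mod_cast h
  have hPa0 : Pa ≠ 0 := fun h => hdp (by rw [hdetp, h, Complex.ofReal_zero])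
  have hPb0 : Pb ≠ 0 := fun h => hdm (by rw [hdetm, h, Complex.ofReal_zero])
  have hEa : ∀ i, hplus.eigenvalues i ≠ 0 := by
    intro i hi
    exact hPa0 (Finset.prod_eq_zero (Finset.mem_univ i) hi)
  have hEb : ∀ i, hminus.eigenvalues i ≠ 0 := by
    intro i hi
    exact hPb0 (Finset.prod_eq_zero (Finset.mem_univ i) hi)
  have hparA : Pa < 0 ↔ Odd qa := prod_neg_iff_odd hEa
  have hparB : Pb < 0 ↔ Odd qb := prod_neg_iff_odd hEb
  have hc0 : Pa * Pb < 0 := by rw [hPab]; exact hc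
  have hne : qa ≠ qb := by
    intro h
    have hiff : Pa < 0 ↔ Pb < 0 := by rw [hparA, hparB, h]
    rcases lt_trichotomy Pa 0 with h1 | h1 | h1
    · have h2 := hiff.1 h1; nlinarith
    · exact hPa0 h1
    · have h2 : ¬ Pb < 0 := fun hb => absurd (hiff.2 hb) (not_lt.2 h1.le)
      push_neg at h2
      nlinarith
  -- qb ≤ qa
  obtain ⟨W, hWrank, hWneg⟩ := exists_neg_subspace hminus
  rw [← hqb_def] at hWrank
  have h1 : qb ≤ qa := by
    rw [hqa_def, ← hWrank]
    apply finrank_le_negCount hplus W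
    intro x hx hx0
    have hneg := hWneg x hx hx0
    have hq := qf_bordered_sub b a v A₀ x
    nlinarith [sq_nonneg ‖x (Sum.inl 0)‖]
  -- qa ≤ qb + 1
  obtain ⟨W₂, hW2rank, hW2neg⟩ := exists_neg_subspace hplus
  rw [← hqa_def] at hW2rank
  have h2 : qa ≤ qb + 1 := by
    set φ : EuclideanSpace ℂ (Fin 1 ⊕ Fin n) →ₗ[ℂ] ℂ :=
      { toFun := fun x => x (Sum.inl 0)
        map_add' := fun x y => rfl
        map_smul' := fun c x => rfl } with hφ_def
    have hrn := LinearMap.finrank_range_add_finrank_ker φ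
    rw [finrank_euclideanSpace] at hrn
    have hcard : Fintype.card (Fin 1 ⊕ Fin n) = 1 + n := by simp
    have hrange : Module.finrank ℂ (LinearMap.range φ) ≤ 1 := by
      have := Submodule.finrank_le (LinearMap.range φ)
      simpa using this
    have hker : 1 + n ≤ Module.finrank ℂ (LinearMap.ker φ) + 1 := by omega
    have hint := Submodule.finrank_sup_add_finrank_inf_eq W₂ (LinearMap.ker φ)
    have hsup : Module.finrank ℂ ↥(W₂ ⊔ LinearMap.ker φ) ≤ 1 + n := by
      have := Submodule.finrank_le (W₂ ⊔ LinearMap.ker φ)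
      rwa [finrank_euclideanSpace, hcard] at this
    have hW' : qa ≤ Module.finrank ℂ ↥(W₂ ⊓ LinearMap.ker φ) + 1 := by
      rw [hqa_def, ← hqa_def, ← hW2rank]
      omega
    have hle : Module.finrank ℂ ↥(W₂ ⊓ LinearMap.ker φ) ≤ qb := by
      rw [hqb_def]
      apply finrank_le_negCount hminus
      intro x hx hx0
      have hxW : x ∈ W₂ := hx.1
      have hx0' : x (Sum.inl 0) = 0 := hx.2
      have hneg := hW2neg x hxW hx0
      have hq := qf_bordered_sub a b v A₀ x
      rw [hx0'] at hq
      simp at hq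
      linarith
    omega
  have hqaqb : qa = qb + 1 := by omega
  -- counting positives
  have hcard : Fintype.card (Fin 1 ⊕ Fin n) = 1 + n := by simp
  have hqa_le : qa ≤ 1 + n := by
    rw [hqa_def]
    simpa [hcard] using Finset.card_filter_le (Finset.univ : Finset (Fin 1 ⊕ Fin n)) _
  have hqb_le : qb ≤ 1 + n := by
    rw [hqb_def]
    simpa [hcard] using Finset.card_filter_le (Finset.univ : Finset (Fin 1 ⊕ Fin n)) _
  have hpa : (Finset.univ.filter fun i => 0 < hplus.eigenvalues i).card = (1 + n) - qa := by
    have hfe : (Finset.univ.filter fun i => 0 < hplus.eigenvalues i)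
        = Finset.univ.filter fun i => ¬ hplus.eigenvalues i < 0 := by
      apply Finset.filter_congr
      intro i _
      constructor
      · intro h; exact not_lt.2 h.le
      · intro h; exact lt_of_le_of_ne (not_lt.1 h) (Ne.symm (hEa i))
    rw [hfe, Finset.filter_not, Finset.card_sdiff_of_subset (Finset.filter_subset _ _),
      Finset.card_univ, hcard, hqa_def]
  have hpb : (Finset.univ.filter fun i => 0 < hminus.eigenvalues i).card = (1 + n) - qb := by
    have hfe : (Finset.univ.filter fun i => 0 < hminus.eigenvalues i)
        = Finset.univ.filter fun i => ¬ hminus.eigenvalues i < 0 := by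
      apply Finset.filter_congr
      intro i _
      constructor
      · intro h; exact not_lt.2 h.le
      · intro h; exact lt_of_le_of_ne (not_lt.1 h) (Ne.symm (hEb i))
    rw [hfe, Finset.filter_not, Finset.card_sdiff_of_subset (Finset.filter_subset _ _),
      Finset.card_univ, hcard, hqb_def]
  left
  simp only [matSig]
  rw [hpa, hpb, ← hqa_def, ← hqb_def]
  omega
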